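/- With a = i, b = 2, the determinant of the 2k×2k matrix F_{2k} equals P(k+1)², the square of the (k+1)-st Pell number, for all k ≥ 1. -/

import Mathlib

/-!
Conjugating `F` by the block unitriangular matrices `[[1, 0], [∓ω, 1]]` with `ω = iᵏ`, so that
`ω² = (-1)ᵏ`, makes it block triangular: `det F = det (A + ωB) · det (A - ωB)`. Since `A` and `B`
commute and `B² = (-1)ᵏ⁺¹ · 4`, this is `det (A² + 4) = det (A + 2i) · det (A - 2i)`. Both factors
are tridiagonal with off-diagonal product `i · (-i) = 1`; their determinants satisfy
`Dₙ₊₂ = ±2i Dₙ₊₁ - Dₙ`, which is solved by `(±i)ⁿ P(n+1)`.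
-/

/-- The Pell sequence: `P 0 = 0`, `P 1 = 1`, `P (n+2) = 2 * P (n+1) + P n`. -/
def pell : ℕ → ℕ
  | 0 => 0
  | 1 => 1
  | (n + 2) => 2 * pell (n + 1) + pell n

open Matrix Complex

namespace Matrix

variable {R : Type*} [CommRing R]

section Tridiagonal

def tridiag (d u l : R) (n : ℕ) : Matrix (Fin n) (Fin n) R :=
  of fun p q => if q.val = p.val + 1 then u else if p.val = q.val + 1 then l
    else if p.val = q.val then d else 0

def tridiagDet (d m : R) : ℕ → R
  | 0 => 1
  | 1 => d
  | n + 2 => d * tridiagDet d m (n + 1) - m * tridiagDet d m n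

variable (d u l : R) (n : ℕ)

theorem tridiag_submatrix_succ_succ :
    (tridiag d u l (n + 1)).submatrix Fin.succ Fin.succ = tridiag d u l n := by
  ext p q
  simp [tridiag]

theorem det_tridiag_submatrix_succ_succAbove_one :
    ((tridiag d u l (n + 2)).submatrix Fin.succ (Fin.succAbove 1)).det
      = l * (tridiag d u l n).det := by
  rw [det_succ_column_zero, Fin.sum_univ_succ, Fintype.sum_eq_zero _ fun i => ?_]
  · have hminor : submatrix ((tridiag d u l (n + 2)).submatrix Fin.succ (Fin.succAbove 1))
        (Fin.succAbove 0) Fin.succ = tridiag d u l n := by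
      ext p q
      simp [tridiag, Fin.one_succAbove_succ]
    rw [hminor]
    simp [tridiag]
  · simp [tridiag]

theorem det_tridiag : ∀ n, (tridiag d u l n).det = tridiagDet d (u * l) n
  | 0 => by simp [tridiagDet]
  | 1 => by simp [tridiag, tridiagDet]
  | n + 2 => by
    rw [det_succ_row_zero, Fin.sum_univ_succ, Fin.sum_univ_succ,
      Fintype.sum_eq_zero _ fun j => by simp [tridiag]]
    have hsucc_zero : (Fin.succ 0 : Fin (n + 2)) = 1 := rfl
    rw [hsucc_zero, det_tridiag_submatrix_succ_succAbove_one, Fin.succAbove_zero,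
      tridiag_submatrix_succ_succ, det_tridiag n, det_tridiag (n + 1)]
    simp [tridiag, tridiagDet]
    ring

theorem tridiag_add_smul_one (c : R) :
    tridiag d u l n + c • (1 : Matrix (Fin n) (Fin n) R) = tridiag (d + c) u l n := by
  ext p q
  simp only [tridiag, add_apply, smul_apply, one_apply, of_apply, smul_eq_mul, Fin.ext_iff]
  split_ifs <;> first | (exfalso; omega) | ring

theorem tridiag_sub_smul_one (c : R) :
    tridiag d u l n - c • (1 : Matrix (Fin n) (Fin n) R) = tridiag (d - c) u l n := by
  rw [sub_eq_add_neg, ← neg_smul, tridiag_add_smul_one, sub_eq_add_neg]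

end Tridiagonal

section Antidiagonal

def altAntidiag (b : R) (n : ℕ) : Matrix (Fin n) (Fin n) R :=
  of fun p q => if p.val + q.val + 1 = n then (-1) ^ p.val * b else 0

variable {n : ℕ} (b : R)

theorem altAntidiag_apply (p q : Fin n) :
    altAntidiag b n p q = if p = q.rev then (-1) ^ p.val * b else 0 := by
  simp only [altAntidiag, Fin.ext_iff, Fin.val_rev]
  exact if_congr (by omega) rfl rfl

theorem mul_altAntidiag_apply (M : Matrix (Fin n) (Fin n) R) (p r : Fin n) :
    (M * altAntidiag b n) p r = M p r.rev * ((-1) ^ r.rev.val * b) := by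
  simp [mul_apply, altAntidiag_apply]

theorem altAntidiag_mul_apply (M : Matrix (Fin n) (Fin n) R) (p r : Fin n) :
    (altAntidiag b n * M) p r = (-1) ^ p.val * b * M p.rev r := by
  simp [mul_apply, altAntidiag_apply, ← Fin.rev_eq_iff]

theorem commute_tridiag_altAntidiag (d u : R) :
    Commute (tridiag d u (-u) n) (altAntidiag b n) := by
  ext p r
  rw [mul_altAntidiag_apply, altAntidiag_mul_apply]
  simp only [tridiag, of_apply, Fin.val_rev]
  split_ifs <;> grind

theorem altAntidiag_mul_self :
    altAntidiag b n * altAntidiag b n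
      = ((-1) ^ (n + 1) * b ^ 2) • (1 : Matrix (Fin n) (Fin n) R) := by
  ext p r
  rw [altAntidiag_mul_apply, altAntidiag_apply]
  simp only [Fin.rev_inj]
  by_cases h : p = r
  · subst h
    simp only [↓reduceIte, smul_apply, one_apply_eq, smul_eq_mul, mul_one, Fin.val_rev]
    rw [show n + 1 = p + (n - (p + 1)) + 2 by omega, pow_add, pow_add]
    ring
  · simp [h]

end Antidiagonal

section Blocks

variable {m : Type*} [Fintype m] [DecidableEq m] (A B : Matrix m m R)

theorem det_fromBlocks_smul_self (ω : R) :
    (fromBlocks A B ((ω * ω) • B) A).det = (A + ω • B).det * (A - ω • B).det := by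
  have htri : fromBlocks 1 0 (-ω • 1) 1 * fromBlocks A B ((ω * ω) • B) A *
      fromBlocks 1 0 (ω • 1) 1 = fromBlocks (A + ω • B) B 0 (A - ω • B) := by
    simp only [fromBlocks_multiply, fromBlocks_inj, Matrix.one_mul, Matrix.mul_one,
      Matrix.zero_mul, Matrix.mul_zero, Matrix.smul_mul, Matrix.mul_smul, add_zero, zero_add]
    refine ⟨?_, trivial, ?_, ?_⟩ <;> module
  simpa [det_fromBlocks_zero₁₂, det_fromBlocks_zero₂₁] using congrArg det htri

theorem det_fromBlocks_smul_self_of_commute (hAB : Commute A B) (ω : R) :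
    (fromBlocks A B ((ω * ω) • B) A).det = (A * A - (ω * ω) • (B * B)).det := by
  rw [det_fromBlocks_smul_self, ← det_mul]
  congr 1
  simp only [add_mul, mul_sub, Matrix.smul_mul, Matrix.mul_smul, hAB.eq]
  module

end Blocks

end Matrix

theorem tridiagDet_two_mul_eq_pell {R : Type*} [CommRing R] {ε : R} (hε : ε * ε = -1) :
    ∀ n, tridiagDet (2 * ε) 1 n = ε ^ n * pell (n + 1)
  | 0 => by simp [tridiagDet, pell]
  | 1 => by simp [tridiagDet, pell]; ring
  | n + 2 => by
    rw [tridiagDet, tridiagDet_two_mul_eq_pell hε n, tridiagDet_two_mul_eq_pell hε (n + 1),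
      show pell (n + 2 + 1) = 2 * pell (n + 2) + pell (n + 1) from rfl]
    push_cast
    linear_combination -(ε ^ n * pell (n + 1)) * hε

theorem stmt15_general (k : ℕ)
    (A B : Matrix (Fin k) (Fin k) ℂ)
    (hA : ∀ p q : Fin k, A p q =
      if q.1 = p.1 + 1 then Complex.I else if p.1 = q.1 + 1 then -Complex.I else 0)
    (hB : ∀ p q : Fin k, B p q =
      if p.1 + q.1 + 1 = k then (-1 : ℂ) ^ p.1 * 2 else 0) :
    (Matrix.fromBlocks A B (((-1 : ℂ) ^ k) • B) A).det = (pell (k + 1) : ℂ) ^ 2 := by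
  obtain rfl : A = tridiag 0 I (-I) k := by ext p q; simp [hA, tridiag]
  obtain rfl : B = altAntidiag 2 k := by ext p q; simp [hB, altAntidiag]
  have hsign : (-1 : ℂ) ^ k = I ^ k * I ^ k := by rw [← mul_pow, I_mul_I]
  have hscalar : I ^ k * I ^ k * ((-1) ^ (k + 1) * 2 ^ 2) = 2 * I * (2 * I) := by
    rw [← hsign, ← mul_assoc, ← pow_add, ← add_assoc, ← two_mul, pow_succ, pow_mul]
    linear_combination -4 * I_mul_I
  have hfactor : ∀ T : Matrix (Fin k) (Fin k) ℂ,
      T * T - (2 * I * (2 * I)) • 1 = (T + (2 * I) • 1) * (T - (2 * I) • 1) := by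
    intro T
    simp only [add_mul, mul_sub, Matrix.smul_mul, Matrix.mul_smul, Matrix.one_mul, Matrix.mul_one]
    module
  have hdet (ε : ℂ) (hε : ε * ε = -1) :
      (tridiag (2 * ε) I (-I) k).det = ε ^ k * pell (k + 1) := by
    rw [det_tridiag, mul_neg, I_mul_I, neg_neg, tridiagDet_two_mul_eq_pell hε]
  rw [hsign, det_fromBlocks_smul_self_of_commute _ _ (commute_tridiag_altAntidiag _ _ _),
    altAntidiag_mul_self, smul_smul, hscalar, hfactor, det_mul, tridiag_add_smul_one,
    tridiag_sub_smul_one, zero_add, zero_sub, ← mul_neg, hdet I I_mul_I,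
    hdet (-I) (by rw [neg_mul_neg, I_mul_I])]
  rw [mul_mul_mul_comm, ← mul_pow, mul_neg, I_mul_I, neg_neg, one_pow, one_mul, sq]

/-- With `a = i`, `b = 2`: for all `k ≥ 1`, the determinant of the `2k × 2k` matrix
`F_{2k} = [[A_k, B_k], [(-1)^k B_k, A_k]]` equals `P(k+1)²`, the square of the
`(k+1)`-st Pell number. -/
theorem stmt15 (k : ℕ) (hk : 1 ≤ k)
    (A B : Matrix (Fin k) (Fin k) ℂ)
    (hA : ∀ p q : Fin k, A p q =
      if q.1 = p.1 + 1 then Complex.I else if p.1 = q.1 + 1 then -Complex.I else 0)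
    (hB : ∀ p q : Fin k, B p q =
      if p.1 + q.1 + 1 = k then (-1 : ℂ) ^ p.1 * 2 else 0) :
    (Matrix.fromBlocks A B (((-1 : ℂ) ^ k) • B) A).det = (pell (k + 1) : ℂ) ^ 2 :=
  stmt15_general k A B hA hB
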